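/- Let F(w,k) = e^{2wτ} − e^{wτ} + τρ₀²BC(e^{ik}−1)V′ − γτρ₀²BC(e^{ik}−1)²V′, and expand w = w₁(ik) + w₂(ik)² + O(k³) as a solution of F = 0 near (w,k) = (0,0). Then the first-order coefficient is w₁ = −ρ₀²BCV′ and the second-order coefficient is w₂ = −(3/2)τw₁² − ((1−2γ)/2)ρ₀²BCV′. -/

import Mathlib

/-!
Put `p k = w₁ (ik) + w₂ (ik)²`. Every term of `G k = F (p k) k` is built from `k`, constants and
`exp` by sums and products, so its value and first two derivatives at `0` follow from the
Leibniz and chain rules, with `p 0 = 0`, `p' 0 = i w₁` and `p'' 0 = -2 w₂`. The first derivative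
of `G` at `0` is `iτ (w₁ + ρ₀²BCV')` and the second is `-2τ (w₂ + (3/2) τ w₁² + ((1-2γ)/2) ρ₀²BCV')`,
which vanish for the stated `w₁` and `w₂`.
-/

open Filter Topology Complex

section TwoJet

variable {𝕜 : Type*} [NontriviallyNormedField 𝕜]

/-- The `2`-jet of `f` at `x` is `(v, d₁, d₂)`: requiring a derivative on a neighbourhood of `x`
makes `d₂` the value of `deriv (deriv f) x`. -/
def HasTwoJetAt (f : 𝕜 → 𝕜) (v d₁ d₂ x : 𝕜) : Prop :=
  f x = v ∧ ∃ f' : 𝕜 → 𝕜, (∀ᶠ y in 𝓝 x, HasDerivAt f (f' y) y) ∧ f' x = d₁ ∧ HasDerivAt f' d₂ x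

namespace HasTwoJetAt

variable {f g : 𝕜 → 𝕜} {v w d₁ d₂ e₁ e₂ x : 𝕜}

theorem eq (h : HasTwoJetAt f v d₁ d₂ x) : f x = v := h.1

theorem deriv (h : HasTwoJetAt f v d₁ d₂ x) : deriv f x = d₁ := by
  obtain ⟨-, f', hf, rfl, -⟩ := h
  exact hf.self_of_nhds.deriv

theorem deriv_deriv (h : HasTwoJetAt f v d₁ d₂ x) : _root_.deriv (_root_.deriv f) x = d₂ := by
  obtain ⟨-, f', hf, -, hf'⟩ := h
  have hderiv : _root_.deriv f =ᶠ[𝓝 x] f' := hf.mono fun _ hy => hy.deriv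
  rw [hderiv.deriv_eq, hf'.deriv]

theorem add (hf : HasTwoJetAt f v d₁ d₂ x) (hg : HasTwoJetAt g w e₁ e₂ x) :
    HasTwoJetAt (fun y => f y + g y) (v + w) (d₁ + e₁) (d₂ + e₂) x := by
  obtain ⟨hfx, f', hf, rfl, hf'⟩ := hf
  obtain ⟨hgx, g', hg, rfl, hg'⟩ := hg
  refine ⟨by simp only [hfx, hgx], fun y => f' y + g' y, ?_, rfl, hf'.add hg'⟩
  filter_upwards [hf, hg] with y hfy hgy using hfy.add hgy

theorem sub (hf : HasTwoJetAt f v d₁ d₂ x) (hg : HasTwoJetAt g w e₁ e₂ x) :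
    HasTwoJetAt (fun y => f y - g y) (v - w) (d₁ - e₁) (d₂ - e₂) x := by
  obtain ⟨hfx, f', hf, rfl, hf'⟩ := hf
  obtain ⟨hgx, g', hg, rfl, hg'⟩ := hg
  refine ⟨by simp only [hfx, hgx], fun y => f' y - g' y, ?_, rfl, hf'.sub hg'⟩
  filter_upwards [hf, hg] with y hfy hgy using hfy.sub hgy

theorem mul (hf : HasTwoJetAt f v d₁ d₂ x) (hg : HasTwoJetAt g w e₁ e₂ x) :
    HasTwoJetAt (fun y => f y * g y) (v * w) (d₁ * w + v * e₁)
      (d₂ * w + 2 * d₁ * e₁ + v * e₂) x := by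
  obtain ⟨hfx, f', hf, rfl, hf'⟩ := hf
  obtain ⟨hgx, g', hg, rfl, hg'⟩ := hg
  refine ⟨by simp only [hfx, hgx], fun y => f' y * g y + f y * g' y, ?_,
    by simp only [hfx, hgx], ?_⟩
  · filter_upwards [hf, hg] with y hfy hgy using hfy.mul hgy
  · have H := (hf'.mul hg.self_of_nhds).add (hf.self_of_nhds.mul hg')
    rw [hfx, hgx] at H
    exact H.congr_deriv (by ring)

theorem const_mul (c : 𝕜) (hf : HasTwoJetAt f v d₁ d₂ x) :
    HasTwoJetAt (fun y => c * f y) (c * v) (c * d₁) (c * d₂) x := by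
  obtain ⟨hfx, f', hf, rfl, hf'⟩ := hf
  refine ⟨by simp only [hfx], fun y => c * f' y, ?_, rfl, hf'.const_mul c⟩
  filter_upwards [hf] with y hfy using hfy.const_mul c

theorem sq (hf : HasTwoJetAt f v d₁ d₂ x) :
    HasTwoJetAt (fun y => f y ^ 2) (v ^ 2) (2 * v * d₁) (2 * d₁ ^ 2 + 2 * v * d₂) x := by
  have H := hf.mul hf
  simp only [← pow_two] at H
  convert H using 1 <;> ring

theorem congr (h : HasTwoJetAt f v d₁ d₂ x) (hfg : ∀ y, f y = g y) : HasTwoJetAt g v d₁ d₂ x :=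
  funext hfg ▸ h

end HasTwoJetAt

theorem hasTwoJetAt_const (c x : 𝕜) : HasTwoJetAt (fun _ => c) c 0 0 x :=
  ⟨rfl, fun _ => 0, Eventually.of_forall fun y => hasDerivAt_const y c, rfl, hasDerivAt_const x 0⟩

theorem hasTwoJetAt_id (x : 𝕜) : HasTwoJetAt (fun y => y) x 1 0 x :=
  ⟨rfl, fun _ => 1, Eventually.of_forall hasDerivAt_id', rfl, hasDerivAt_const x 1⟩

end TwoJet

theorem HasTwoJetAt.cexp {f : ℂ → ℂ} {v d₁ d₂ x : ℂ} (hf : HasTwoJetAt f v d₁ d₂ x) :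
    HasTwoJetAt (fun y => exp (f y)) (exp v) (exp v * d₁) (exp v * (d₁ ^ 2 + d₂)) x := by
  obtain ⟨hfx, f', hf, rfl, hf'⟩ := hf
  refine ⟨by simp only [hfx], fun y => exp (f y) * f' y, ?_, by simp only [hfx], ?_⟩
  · filter_upwards [hf] with y hfy using hfy.cexp
  · have H := hf.self_of_nhds.cexp.mul hf'
    rw [hfx] at H
    exact H.congr_deriv (by ring)

open Complex in
theorem stmt_5_general (B C ρ₀ τ γ V' : ℝ)
    (F : ℂ → ℂ → ℂ)
    (hF : ∀ w k, F w k =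
      Complex.exp (2 * w * τ) - Complex.exp (w * τ) +
        (τ : ℂ) * ρ₀ ^ 2 * B * C * (Complex.exp (I * k) - 1) * V' -
        (γ : ℂ) * τ * ρ₀ ^ 2 * B * C * (Complex.exp (I * k) - 1) ^ 2 * V')
    (w₁ w₂ : ℝ)
    (hw₁ : w₁ = -ρ₀ ^ 2 * B * C * V')
    (hw₂ : w₂ = -(3 / 2) * τ * w₁ ^ 2 - (1 - 2 * γ) / 2 * ρ₀ ^ 2 * B * C * V')
    (G : ℂ → ℂ) (hG : ∀ k, G k = F ((w₁ : ℂ) * (I * k) + (w₂ : ℂ) * (I * k) ^ 2) k) :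
    G 0 = 0 ∧ deriv G 0 = 0 ∧ deriv (deriv G) 0 = 0 := by
  have hw₁c : (w₁ : ℂ) = -(ρ₀ ^ 2 * B * C * V') := by rw [hw₁]; push_cast; ring
  have hw₂c : (w₂ : ℂ) = -(3 / 2) * τ * w₁ ^ 2 - (1 - 2 * γ) / 2 * (ρ₀ ^ 2 * B * C * V') := by
    rw [hw₂]; push_cast; ring
  have hIk := (hasTwoJetAt_id (0 : ℂ)).const_mul I
  have hp := (hIk.const_mul (w₁ : ℂ)).add (hIk.sq.const_mul (w₂ : ℂ))
  have hE := hIk.cexp.sub (hasTwoJetAt_const 1 0)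
  have hjet : HasTwoJetAt G _ _ _ 0 :=
    ((((hp.const_mul (2 * τ : ℂ)).cexp.sub (hp.const_mul (τ : ℂ)).cexp).add
      (hE.const_mul (τ * ρ₀ ^ 2 * B * C * V' : ℂ))).sub
        (hE.sq.const_mul (γ * τ * ρ₀ ^ 2 * B * C * V' : ℂ))).congr fun k => by
      rw [hG, hF]; ring_nf
  refine ⟨hjet.eq.trans ?_, hjet.deriv.trans ?_, hjet.deriv_deriv.trans ?_⟩
  · norm_num
  · norm_num
    linear_combination (τ * I) * hw₁c
  · norm_num [mul_pow]
    linear_combination (-2 * τ) * hw₂c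

open Complex in
theorem stmt_5 (B C ρ₀ τ γ V' : ℝ) (hB : 0 < B) (hC : 0 < C) (hρ₀ : 0 < ρ₀)
    (hτ : 0 < τ) (hγ : 0 < γ)
    (F : ℂ → ℂ → ℂ)
    (hF : ∀ w k, F w k =
      Complex.exp (2 * w * τ) - Complex.exp (w * τ) +
        (τ : ℂ) * ρ₀ ^ 2 * B * C * (Complex.exp (I * k) - 1) * V' -
        (γ : ℂ) * τ * ρ₀ ^ 2 * B * C * (Complex.exp (I * k) - 1) ^ 2 * V')
    (w₁ w₂ : ℝ)
    (hw₁ : w₁ = -ρ₀ ^ 2 * B * C * V')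
    (hw₂ : w₂ = -(3 / 2) * τ * w₁ ^ 2 - (1 - 2 * γ) / 2 * ρ₀ ^ 2 * B * C * V')
    (G : ℂ → ℂ) (hG : ∀ k, G k = F ((w₁ : ℂ) * (I * k) + (w₂ : ℂ) * (I * k) ^ 2) k) :
    G 0 = 0 ∧ deriv G 0 = 0 ∧ deriv (deriv G) 0 = 0 :=
  stmt_5_general B C ρ₀ τ γ V' F hF w₁ w₂ hw₁ hw₂ G hG
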